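/- arXiv:2210.16132 — 2 statements merged into one kernel-verified Lean document; each statement's English description precedes it below -/
import Mathlib

section
/- Let γ > 1, R⁻ > 0, C₀ > 0 and s ∈ (0, 2c_s(R⁻)). Then there exists η > 0 such that: there exist ε₀ > 0 and constants C₁, C₂ > 0 (independent of ε) such that for every ε ∈ (0, ε₀) and every function R satisfying the profile hypotheses (H_ε), the functions a(x) = (1/2)(f₂/f₁)'(x) + R'(x)f₂(x)/(R(x)f₁(x)) and b(x) = R'(x)/R(x) − f₂(x)g(x)/f₁(x) satisfy, for all x ∈ ℝ: −g(x) − |b(x)|/(2η) ≥ C₁|R'(x)| and a(x) − (η/2)|b(x)| ≥ C₂|R'(x)|. -/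
/-!
The coefficients depend on `x` only through `ρ = R x`, except for the factor `R'` produced by the
chain rule in `(f₂/f₁)'`. Hence `-g - |b|/(2η)` and `a - (η/2)|b|` are `|R'|` times explicit
functions of `(A, ρ)`, continuous where `ρ > 0` and `f₁ > 0`. As `ε → 0`, `A(ε) → R⁻ c` with
`c = c_s(R⁻)` (the difference quotient in `A(ε)` tends to `h'(R⁻) = c²/R⁻`), and
`ρ ∈ [R⁻ - ε, R⁻]` tends to `R⁻`. At this limit point `f₁ = s(2c - s) > 0`, and both functions
are positive as soon as `η s (2c - s)` exceeds `|c - s|` by a small enough margin; continuity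
then gives the bounds with half of the limiting values for all small `ε`.
-/

open Real Filter

/-- The enthalpy for `γ > 1`: `h(ρ) = γ/(γ-1)·ρ^(γ-1)`. -/
noncomputable def enth (γ ρ : ℝ) : ℝ := γ / (γ - 1) * ρ ^ (γ - 1)

/-- The sound speed `c_s(ρ) = √(γ ρ^(γ-1))`. -/
noncomputable def soundSpeed (γ ρ : ℝ) : ℝ := Real.sqrt (γ * ρ ^ (γ - 1))

/-- The mass flux `A(ε)` of a shock of amplitude `ε` with left state `Rm`. -/
noncomputable def Aflux (γ Rm ε : ℝ) : ℝ :=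
  ((Rm - ε) * Rm / Real.sqrt (2 * Rm - ε)) *
    Real.sqrt (2 * (enth γ Rm - enth γ (Rm - ε)) / ε)

/-- The profile hypotheses (H_ε): `R` is `C²`, takes values in `[R⁻ - ε, R⁻]`, is strictly
decreasing with `R' < 0`, and satisfies `|R'| ≤ C₀ε²`, `|R''| ≤ C₀ε|R'|`. -/
def Hprof (C₀ ε Rm : ℝ) (R : ℝ → ℝ) : Prop :=
  ContDiff ℝ 2 R ∧
  (∀ x : ℝ, Rm - ε ≤ R x ∧ R x ≤ Rm ∧ deriv R x < 0) ∧
  (∀ x : ℝ, |deriv R x| ≤ C₀ * ε ^ 2 ∧ |deriv (deriv R) x| ≤ C₀ * ε * |deriv R x|)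

open Topology

lemma hasDerivAt_enth {γ ρ : ℝ} (hγ : γ ≠ 1) (hρ : 0 < ρ) :
    HasDerivAt (enth γ) (γ * ρ ^ (γ - 2)) ρ := by
  have hγ1 : γ - 1 ≠ 0 := sub_ne_zero.2 hγ
  refine ((Real.hasDerivAt_rpow_const (p := γ - 1) (Or.inl hρ.ne')).const_mul
    (γ / (γ - 1))).congr_deriv ?_
  rw [show γ - 1 - 1 = γ - 2 by ring]
  field_simp

lemma tendsto_enth_slope {γ Rm : ℝ} (hγ : γ ≠ 1) (hRm : 0 < Rm) :
    Tendsto (fun ε => (enth γ Rm - enth γ (Rm - ε)) / ε) (𝓝[>] 0)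
      (𝓝 (γ * Rm ^ (γ - 2))) := by
  have hslope := hasDerivAt_iff_tendsto_slope.1 (hasDerivAt_enth hγ hRm)
  have hleft : Tendsto (fun ε => Rm - ε) (𝓝[>] 0) (𝓝[≠] Rm) := by
    refine tendsto_nhdsWithin_of_tendsto_nhds_of_eventually_within _ ?_ ?_
    · exact tendsto_nhdsWithin_of_tendsto_nhds (by simpa using (continuous_sub_left Rm).tendsto 0)
    · filter_upwards [self_mem_nhdsWithin] with ε hε
      exact (sub_lt_self Rm hε).ne
  refine (hslope.comp hleft).congr' ?_
  filter_upwards [self_mem_nhdsWithin] with ε hε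
  simp only [Function.comp_apply, slope_def_field]
  rw [← neg_div_neg_eq]
  ring_nf

lemma tendsto_Aflux {γ Rm : ℝ} (hγ : γ ≠ 1) (hRm : 0 < Rm) :
    Tendsto (Aflux γ Rm) (𝓝[>] 0) (𝓝 (Rm * soundSpeed γ Rm)) := by
  have hprefactor : Tendsto (fun ε => (Rm - ε) * Rm / √(2 * Rm - ε)) (𝓝[>] 0)
      (𝓝 (Rm * Rm / √(2 * Rm))) := by
    refine tendsto_nhdsWithin_of_tendsto_nhds ?_
    have : ContinuousAt (fun ε => (Rm - ε) * Rm / √(2 * Rm - ε)) 0 := by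
      refine ContinuousAt.div (by fun_prop) (by fun_prop) ?_
      simp only [sub_zero]
      positivity
    simpa using this.tendsto
  have hlim := hprefactor.mul
    (((tendsto_enth_slope hγ hRm).const_mul 2).sqrt)
  convert hlim using 2
  · simp only [Aflux, mul_div_assoc]
  · have e : 2 * (γ * Rm ^ (γ - 2)) = 2 * Rm * (γ * Rm ^ (γ - 1)) / Rm ^ 2 := by
      rw [show γ - 2 = γ - 1 - 1 by ring, Real.rpow_sub_one hRm.ne']
      field_simp
    rw [e, Real.sqrt_div' _ (sq_nonneg Rm), Real.sqrt_sq hRm.le, soundSpeed,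
      Real.sqrt_mul (x := 2 * Rm) (by positivity)]
    have : √(2 * Rm) ≠ 0 := Real.sqrt_ne_zero'.2 (by positivity)
    field_simp

lemma exists_forall_of_eventually_of_tendsto {p : ℝ × ℝ → Prop} {A : ℝ → ℝ} {A₀ ρ₀ : ℝ}
    (hp : ∀ᶠ q in 𝓝 (A₀, ρ₀), p q) (hA : Tendsto A (𝓝[>] 0) (𝓝 A₀)) :
    ∃ ε₀ > 0, ∀ ε, 0 < ε → ε < ε₀ → ∀ ρ, |ρ - ρ₀| ≤ ε → p (A ε, ρ) := by
  obtain ⟨r, hr, hball⟩ := Metric.eventually_nhds_iff.1 hp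
  obtain ⟨δ, hδ, hAδ⟩ := Metric.tendsto_nhdsWithin_nhds.1 hA r hr
  refine ⟨min δ r, lt_min hδ hr, fun ε hε hεε₀ ρ hρ => hball ?_⟩
  have hAε : dist (A ε) A₀ < r :=
    hAδ hε (by simpa [abs_of_pos hε] using hεε₀.trans_le (min_le_left _ _))
  have hρr : dist ρ ρ₀ < r := hρ.trans_lt (hεε₀.trans_le (min_le_right _ _))
  exact max_lt hAε hρr

namespace ShockCoeff

noncomputable section

/-! The coefficients of the statement as functions of the flux `A` and the density `ρ = R x`;
`f₁'` and `f₂'` are the derivatives in `ρ`. -/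

variable (γ s η A ρ : ℝ)

def f₁ : ℝ := γ * ρ ^ (γ - 1) - (s - A / ρ) ^ 2

def f₂ : ℝ := -s + 2 * A / ρ

def f₁' : ℝ := γ * ((γ - 1) * ρ ^ (γ - 2)) - 2 * (s - A / ρ) * (A / ρ ^ 2)

def f₂' : ℝ := -(2 * A) / ρ ^ 2

def ratioDeriv : ℝ := (f₂' A ρ * f₁ γ s A ρ - f₂ s A ρ * f₁' γ s A ρ) / f₁ γ s A ρ ^ 2

def bFactor : ℝ := (f₁ γ s A ρ - f₂ s A ρ ^ 2) / (ρ * f₁ γ s A ρ)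

def weight₁ : ℝ := f₂ s A ρ / ρ - |bFactor γ s A ρ| / (2 * η)

def weight₂ : ℝ :=
  -(ratioDeriv γ s A ρ / 2 + f₂ s A ρ / (ρ * f₁ γ s A ρ)) - η / 2 * |bFactor γ s A ρ|

variable (R : ℝ → ℝ) (x : ℝ)

def g : ℝ := (2 * A - s * R x) * deriv R x / R x ^ 2

def b : ℝ := deriv R x / R x - f₂ s A (R x) * g s A R x / f₁ γ s A (R x)

def a : ℝ :=
  1 / 2 * deriv (fun y => f₂ s A (R y) / f₁ γ s A (R y)) x
    + deriv R x * f₂ s A (R x) / (R x * f₁ γ s A (R x))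

variable {γ s η A ρ R x}

lemma hasDerivAt_f₁ (hρ : 0 < ρ) : HasDerivAt (f₁ γ s A) (f₁' γ s A ρ) ρ := by
  have hpow : HasDerivAt (fun r => r ^ (γ - 1)) ((γ - 1) * ρ ^ (γ - 2)) ρ := by
    have h := Real.hasDerivAt_rpow_const (p := γ - 1) (Or.inl hρ.ne')
    rwa [show γ - 1 - 1 = γ - 2 by ring] at h
  have hinv : HasDerivAt (fun r => s - A / r) (A / ρ ^ 2) ρ := by
    simpa [div_eq_mul_inv, neg_div] using ((hasDerivAt_inv hρ.ne').const_mul A).const_sub s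
  exact ((hpow.const_mul γ).sub (hinv.pow 2)).congr_deriv (by rw [f₁']; push_cast; ring)

lemma hasDerivAt_f₂ (hρ : ρ ≠ 0) : HasDerivAt (f₂ s A) (f₂' A ρ) ρ := by
  have h := ((hasDerivAt_inv hρ).const_mul (2 * A)).const_add (-s)
  simp only [← div_eq_mul_inv] at h
  exact h.congr_deriv (by rw [f₂']; ring)

lemma hasDerivAt_f₂_div_f₁ (hρ : 0 < ρ) (hf : f₁ γ s A ρ ≠ 0) :
    HasDerivAt (fun r => f₂ s A r / f₁ γ s A r) (ratioDeriv γ s A ρ) ρ :=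
  (hasDerivAt_f₂ hρ.ne').div (hasDerivAt_f₁ hρ) hf

lemma g_eq (hρ : R x ≠ 0) : g s A R x = deriv R x * f₂ s A (R x) / R x := by
  simp only [g, f₂]
  field_simp
  ring

lemma b_eq (hρ : R x ≠ 0) (hf : f₁ γ s A (R x) ≠ 0) :
    b γ s A R x = deriv R x * bFactor γ s A (R x) := by
  simp only [b, bFactor, g_eq hρ]
  field_simp

lemma a_eq (hR : DifferentiableAt ℝ R x) (hρ : 0 < R x) (hf : f₁ γ s A (R x) ≠ 0) :
    a γ s A R x =
      deriv R x * (ratioDeriv γ s A (R x) / 2 + f₂ s A (R x) / (R x * f₁ γ s A (R x))) := by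
  have h := ((hasDerivAt_f₂_div_f₁ hρ hf).comp x hR.hasDerivAt).deriv
  rw [Function.comp_def] at h
  rw [a, h]
  ring

lemma neg_g_sub_eq (hR' : deriv R x < 0) (hρ : 0 < R x) (hf : f₁ γ s A (R x) ≠ 0) :
    -g s A R x - |b γ s A R x| / (2 * η) = weight₁ γ s η A (R x) * |deriv R x| := by
  rw [g_eq hρ.ne', b_eq hρ.ne' hf, abs_mul, abs_of_neg hR', weight₁]
  ring

lemma a_sub_eq (hR : DifferentiableAt ℝ R x) (hR' : deriv R x < 0) (hρ : 0 < R x)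
    (hf : f₁ γ s A (R x) ≠ 0) :
    a γ s A R x - η / 2 * |b γ s A R x| = weight₂ γ s η A (R x) * |deriv R x| := by
  rw [a_eq hR hρ hf, b_eq hρ.ne' hf, abs_mul, abs_of_neg hR', weight₂]
  ring

section LimitPoint

/-! `(Rm * c, Rm)`, with `c` the sound speed at `Rm`, is the limit of `(A(ε), R x)` as `ε → 0`. -/

variable {Rm c : ℝ} (hRm : 0 < Rm) (hc2 : c ^ 2 = γ * Rm ^ (γ - 1))
include hRm

lemma f₂_limit : f₂ s (Rm * c) Rm = 2 * c - s := by
  rw [f₂]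
  field_simp
  ring

include hc2

lemma f₁_limit : f₁ γ s (Rm * c) Rm = s * (2 * c - s) := by
  rw [f₁, mul_div_cancel_left₀ c hRm.ne', ← hc2]
  ring

lemma f₁'_limit : f₁' γ s (Rm * c) Rm = ((γ - 1) * c ^ 2 - 2 * (s - c) * c) / Rm := by
  rw [f₁', mul_div_cancel_left₀ c hRm.ne', show γ - 2 = γ - 1 - 1 by ring,
    Real.rpow_sub_one hRm.ne', ← mul_div_assoc, ← mul_div_assoc, mul_left_comm, ← hc2]
  field_simp

lemma abs_bFactor_limit (hs : 0 < s) (hs2 : s < 2 * c) :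
    |bFactor γ s (Rm * c) Rm| = 2 * |c - s| / (Rm * s) := by
  have h2cs : 2 * c - s ≠ 0 := by linarith
  rw [bFactor, f₁_limit hRm hc2, f₂_limit hRm,
    show s * (2 * c - s) - (2 * c - s) ^ 2 = 2 * (2 * c - s) * (s - c) by ring,
    abs_div, abs_mul, abs_of_pos (by positivity : 0 < Rm * (s * (2 * c - s))),
    abs_of_pos (by linarith : 0 < 2 * (2 * c - s)), abs_sub_comm]
  field_simp

lemma weight₁_limit (hs : 0 < s) (hs2 : s < 2 * c) (hη : η ≠ 0) :
    weight₁ γ s η (Rm * c) Rm = (η * (s * (2 * c - s)) - |c - s|) / (Rm * s * η) := by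
  rw [weight₁, abs_bFactor_limit hRm hc2 hs hs2, f₂_limit hRm]
  field_simp

lemma weight₂_limit (hs : 0 < s) (hs2 : s < 2 * c) :
    weight₂ γ s η (Rm * c) Rm = (2 * c - s) *
      ((c - s) ^ 2 + (γ - 1) * c ^ 2 / 2 - η * (s * (2 * c - s)) * |c - s|)
        / (Rm * (s * (2 * c - s)) ^ 2) := by
  have h2cs : 2 * c - s ≠ 0 := by linarith
  rw [weight₂, ratioDeriv, f₂', abs_bFactor_limit hRm hc2 hs hs2, f₁_limit hRm hc2,
    f₁'_limit hRm hc2, f₂_limit hRm]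
  field_simp
  ring

lemma exists_weights_limit_pos (hγ : 1 < γ) (hc : 0 < c) (hs : 0 < s) (hs2 : s < 2 * c) :
    ∃ η > 0, 0 < weight₁ γ s η (Rm * c) Rm ∧ 0 < weight₂ γ s η (Rm * c) Rm := by
  set m := |c - s|
  set P := s * (2 * c - s)
  have hP : 0 < P := mul_pos hs (by linarith)
  -- `weight₁` needs `η P > m`, `weight₂` needs `η P m < m² + (γ - 1) c² / 2`
  have hm : 0 < m + 1 := by positivity
  set κ := (γ - 1) * c ^ 2 / (2 * (m + 1))
  have hκ : 0 < κ := div_pos (mul_pos (by linarith) (by positivity)) (by positivity)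
  have hηP : (m + κ) / P * P = m + κ := div_mul_cancel₀ _ hP.ne'
  refine ⟨(m + κ) / P, by positivity, ?_, ?_⟩
  · rw [weight₁_limit hRm hc2 hs hs2 (by positivity), hηP, add_sub_cancel_left]
    positivity
  · have hinner : (c - s) ^ 2 + (γ - 1) * c ^ 2 / 2 - (m + κ) / P * P * m = κ := by
      have hκm : κ * (m + 1) = (γ - 1) * c ^ 2 / 2 := by
        simp only [κ]
        field_simp [hm.ne']
      rw [hηP, ← sq_abs (c - s)]
      linear_combination -hκm
    rw [weight₂_limit hRm hc2 hs hs2, hinner]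
    exact div_pos (mul_pos (by linarith) hκ) (by positivity)

end LimitPoint

lemma eventually_lt_weights {A₀ ρ₀ w₁ w₂ : ℝ} (hρ₀ : 0 < ρ₀) (hf : 0 < f₁ γ s A₀ ρ₀)
    (hw₁ : w₁ < weight₁ γ s η A₀ ρ₀) (hw₂ : w₂ < weight₂ γ s η A₀ ρ₀) :
    ∀ᶠ q : ℝ × ℝ in 𝓝 (A₀, ρ₀), 0 < q.2 ∧ 0 < f₁ γ s q.1 q.2 ∧
      w₁ < weight₁ γ s η q.1 q.2 ∧ w₂ < weight₂ γ s η q.1 q.2 := by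
  have hρ₀' := hρ₀.ne'
  have hf' := hf.ne'
  have hcont₁ : ContinuousAt (fun q : ℝ × ℝ => f₁ γ s q.1 q.2) (A₀, ρ₀) := by
    unfold f₁ at *
    fun_prop (disch := simp_all)
  have hcontw₁ : ContinuousAt (fun q : ℝ × ℝ => weight₁ γ s η q.1 q.2) (A₀, ρ₀) := by
    unfold weight₁ bFactor f₂ f₁ at *
    fun_prop (disch := simp_all)
  have hcontw₂ : ContinuousAt (fun q : ℝ × ℝ => weight₂ γ s η q.1 q.2) (A₀, ρ₀) := by
    unfold weight₂ ratioDeriv bFactor f₁' f₂' f₂ f₁ at *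
    fun_prop (disch := simp_all)
  exact (continuousAt_snd.eventually (eventually_gt_nhds hρ₀)).and <|
    (hcont₁.eventually (eventually_gt_nhds hf)).and <|
    (hcontw₁.eventually (eventually_gt_nhds hw₁)).and
    (hcontw₂.eventually (eventually_gt_nhds hw₂))

end

end ShockCoeff

theorem stmt3_general (γ Rm C₀ s : ℝ) (hγ : 1 < γ) (hRm : 0 < Rm)
    (hs : 0 < s) (hs2 : s < 2 * soundSpeed γ Rm) :
    ∃ η > (0:ℝ), ∃ ε₀ > (0:ℝ), ∃ C₁ > (0:ℝ), ∃ C₂ > (0:ℝ), ∀ ε : ℝ, 0 < ε → ε < ε₀ →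
      ∀ R : ℝ → ℝ, Hprof C₀ ε Rm R →
        let f₁ : ℝ → ℝ := fun x => γ * R x ^ (γ - 1) - (s - Aflux γ Rm ε / R x) ^ 2
        let f₂ : ℝ → ℝ := fun x => -s + 2 * Aflux γ Rm ε / R x
        let g : ℝ → ℝ := fun x => (2 * Aflux γ Rm ε - s * R x) * deriv R x / (R x) ^ 2
        let a : ℝ → ℝ := fun x =>
          (1/2) * deriv (fun y => f₂ y / f₁ y) x + deriv R x * f₂ x / (R x * f₁ x)
        let b : ℝ → ℝ := fun x => deriv R x / R x - f₂ x * g x / f₁ x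
        ∀ x : ℝ,
          -g x - |b x| / (2 * η) ≥ C₁ * |deriv R x| ∧
          a x - (η / 2) * |b x| ≥ C₂ * |deriv R x| := by
  open ShockCoeff in
  have hc2 : soundSpeed γ Rm ^ 2 = γ * Rm ^ (γ - 1) := Real.sq_sqrt (by positivity)
  have hc : 0 < soundSpeed γ Rm := Real.sqrt_pos.2 (by positivity)
  obtain ⟨η, hη, hw₁, hw₂⟩ := exists_weights_limit_pos hRm hc2 hγ hc hs hs2
  have hf : 0 < f₁ γ s (Rm * soundSpeed γ Rm) Rm := by
    rw [f₁_limit hRm hc2]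
    nlinarith
  obtain ⟨ε₀, hε₀, hnear⟩ := exists_forall_of_eventually_of_tendsto
    (eventually_lt_weights hRm hf (half_lt_self hw₁) (half_lt_self hw₂))
    (tendsto_Aflux hγ.ne' hRm)
  refine ⟨η, hη, ε₀, hε₀, _, half_pos hw₁, _, half_pos hw₂, ?_⟩
  rintro ε hε hεε₀ R ⟨hR, hbounds, -⟩ _ _ _ _ _ x
  obtain ⟨hlo, hhi, hR'⟩ := hbounds x
  obtain ⟨hρ, hfx, h₁, h₂⟩ := hnear ε hε hεε₀ (R x) (abs_le.2 ⟨by linarith, by linarith⟩)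
  have hRx : DifferentiableAt ℝ R x := (hR.differentiable (by norm_num)).differentiableAt
  show -g s _ R x - |b γ s _ R x| / (2 * η) ≥ _ ∧ a γ s _ R x - η / 2 * |b γ s _ R x| ≥ _
  rw [neg_g_sub_eq hR' hρ hfx.ne', a_sub_eq hRx hR' hρ hfx.ne']
  exact ⟨mul_le_mul_of_nonneg_right h₁.le (abs_nonneg _),
    mul_le_mul_of_nonneg_right h₂.le (abs_nonneg _)⟩

/-- Choice of the weight `η` and estimates on the coefficients `a` and `b` (Lemma 3.3). -/
theorem stmt3 (γ Rm C₀ s : ℝ) (hγ : 1 < γ) (hRm : 0 < Rm) (hC₀ : 0 < C₀)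
    (hs : 0 < s) (hs2 : s < 2 * soundSpeed γ Rm) :
    ∃ η > (0:ℝ), ∃ ε₀ > (0:ℝ), ∃ C₁ > (0:ℝ), ∃ C₂ > (0:ℝ), ∀ ε : ℝ, 0 < ε → ε < ε₀ →
      ∀ R : ℝ → ℝ, Hprof C₀ ε Rm R →
        let f₁ : ℝ → ℝ := fun x => γ * R x ^ (γ - 1) - (s - Aflux γ Rm ε / R x) ^ 2
        let f₂ : ℝ → ℝ := fun x => -s + 2 * Aflux γ Rm ε / R x
        let g : ℝ → ℝ := fun x => (2 * Aflux γ Rm ε - s * R x) * deriv R x / (R x) ^ 2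
        let a : ℝ → ℝ := fun x =>
          (1/2) * deriv (fun y => f₂ y / f₁ y) x + deriv R x * f₂ x / (R x * f₁ x)
        let b : ℝ → ℝ := fun x => deriv R x / R x - f₂ x * g x / f₁ x
        ∀ x : ℝ,
          -g x - |b x| / (2 * η) ≥ C₁ * |deriv R x| ∧
          a x - (η / 2) * |b x| ≥ C₂ * |deriv R x| :=
  stmt3_general γ Rm C₀ s hγ hRm hs hs2
end

section
/- Let s, μ, k ∈ ℝ, let R, U : ℝ → ℝ with R three times continuously differentiable and strictly positive and U twice continuously differentiable, and let h' : (0,∞) → ℝ be continuously differentiable. Let λ ∈ ℂ and let ρ, u : ℝ → ℂ with ρ three times continuously differentiable and u twice continuously differentiable satisfy, for all x ∈ ℝ, the integrated spectral equations: λρ = (s−U)ρ' − Ru' and λu = −h'(R)ρ' + (s−U)u' + μR⁻¹(Ru' + Uρ')' − μR⁻²(RU)'ρ' + (k²/2)R^{−1/2}(R^{−1/2}ρ')'' − (k²/2)R^{−3/2}(R^{1/2})''ρ'. Define v := Uρ + Ru, g := R·(U/R)', f₁ := R·h'(R) − U², f₂ := s − 2U, and (L_Qρ) := (1/2)R^{1/2}(R^{−1/2}ρ')''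 − (1/2)R^{−1/2}(R^{1/2})''ρ'. Then for all x ∈ ℝ: λρ = sρ' − v' + gρ + (R'/R)v, and λv = −f₁ρ' + f₂v' + μv'' − f₂gρ − (R'/R)f₂v − 2μU'ρ' − μ(R'/R)v' − μg'ρ − μ(R'/R)'v + k²·(L_Qρ). -/
/-!
Everything is pointwise algebra once `v'`, `v''`, `g = U' - U R'/R`, `g'` and `(R'/R)'` are
expanded by the product and quotient rules. Writing `Ru' = v' - U'ρ - Uρ' - R'u` in the mass
equation and noting `U'ρ + R'u = gρ + (R'/R)v` gives the first identity. The second is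
`λv = U·(λρ) + R·(λu)` expanded the same way; its dispersive term becomes `k² L_Q ρ` because
`R · R^{-1/2} = R^{1/2}` and `R · R^{-3/2} = R^{-1/2}`.
-/

open Real

section

variable {E : Type*} [NormedAddCommGroup E] [NormedSpace ℝ E] {f : ℝ → E}

theorem ContDiff.hasDerivAt_deriv {n : WithTop ℕ∞} (hf : ContDiff ℝ n f) (hn : n ≠ 0) (x : ℝ) :
    HasDerivAt f (deriv f x) x :=
  (hf.differentiable hn x).hasDerivAt

theorem ContDiff.hasDerivAt_deriv_deriv (hf : ContDiff ℝ 2 f) (x : ℝ) :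
    HasDerivAt (deriv f) (deriv (deriv f) x) x :=
  (hf.differentiable_deriv_two x).hasDerivAt

end

section

variable {a b : ℝ → ℝ} {f g : ℝ → ℂ}

theorem HasDerivAt.ofReal_mul_add_ofReal_mul {a' b' : ℝ} {f' g' : ℂ} {x : ℝ}
    (ha : HasDerivAt a a' x) (hb : HasDerivAt b b' x)
    (hf : HasDerivAt f f' x) (hg : HasDerivAt g g' x) :
    HasDerivAt (fun t => (a t : ℂ) * f t + (b t : ℂ) * g t)
      ((a' : ℂ) * f x + a x * f' + ((b' : ℂ) * g x + b x * g')) x :=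
  (ha.ofReal_comp.mul hf).add (hb.ofReal_comp.mul hg)

theorem deriv_ofReal_mul_add_ofReal_mul (ha : Differentiable ℝ a) (hb : Differentiable ℝ b)
    (hf : Differentiable ℝ f) (hg : Differentiable ℝ g) :
    deriv (fun t => (a t : ℂ) * f t + (b t : ℂ) * g t) = fun t =>
      ((deriv a t : ℝ) : ℂ) * f t + a t * deriv f t
        + (((deriv b t : ℝ) : ℂ) * g t + b t * deriv g t) :=
  funext fun t => ((ha t).hasDerivAt.ofReal_mul_add_ofReal_mul (hb t).hasDerivAt
    (hf t).hasDerivAt (hg t).hasDerivAt).deriv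

theorem deriv_deriv_ofReal_mul_add_ofReal_mul (ha : ContDiff ℝ 2 a) (hb : ContDiff ℝ 2 b)
    (hf : ContDiff ℝ 2 f) (hg : ContDiff ℝ 2 g) (x : ℝ) :
    deriv (deriv (fun t => (a t : ℂ) * f t + (b t : ℂ) * g t)) x =
      ((deriv (deriv a) x : ℝ) : ℂ) * f x + 2 * ((deriv a x : ℝ) : ℂ) * deriv f x
          + a x * deriv (deriv f) x
        + (((deriv (deriv b) x : ℝ) : ℂ) * g x + 2 * ((deriv b x : ℝ) : ℂ) * deriv g x
          + b x * deriv (deriv g) x) := by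
  rw [deriv_ofReal_mul_add_ofReal_mul (ha.differentiable two_ne_zero)
    (hb.differentiable two_ne_zero) (hf.differentiable two_ne_zero)
    (hg.differentiable two_ne_zero)]
  have hderiv := ((ha.hasDerivAt_deriv_deriv x).ofReal_mul_add_ofReal_mul
      (hb.hasDerivAt_deriv_deriv x) (hf.hasDerivAt_deriv two_ne_zero x)
      (hg.hasDerivAt_deriv two_ne_zero x)).add
    ((ha.hasDerivAt_deriv two_ne_zero x).ofReal_mul_add_ofReal_mul
      (hb.hasDerivAt_deriv two_ne_zero x) (hf.hasDerivAt_deriv_deriv x)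
      (hg.hasDerivAt_deriv_deriv x))
  rw [show (fun t => ((deriv a t : ℝ) : ℂ) * f t + a t * deriv f t
      + (((deriv b t : ℝ) : ℂ) * g t + b t * deriv g t)) = fun t => (((deriv a t : ℝ) : ℂ) * f t
      + ((deriv b t : ℝ) : ℂ) * g t) + ((a t : ℂ) * deriv f t + (b t : ℂ) * deriv g t) by
    funext t; ring]
  exact hderiv.deriv.trans (by ring)

end

section

variable {U R : ℝ → ℝ}

theorem mul_deriv_div_eq_sub_mul_logDeriv {x : ℝ} (hU : DifferentiableAt ℝ U x)
    (hR : DifferentiableAt ℝ R x) (hRx : R x ≠ 0) :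
    R x * deriv (fun y => U y / R y) x = deriv U x - U x * logDeriv R x := by
  rw [(hU.hasDerivAt.fun_div hR.hasDerivAt hRx).deriv, logDeriv_apply]
  field_simp

theorem hasDerivAt_logDeriv {x : ℝ} (hR : ContDiff ℝ 2 R) (hRx : R x ≠ 0) :
    HasDerivAt (logDeriv R) (deriv (deriv R) x / R x - logDeriv R x ^ 2) x := by
  refine ((hR.hasDerivAt_deriv_deriv x).div (hR.hasDerivAt_deriv two_ne_zero x)
    hRx).congr_deriv ?_
  rw [logDeriv_apply]
  field_simp

theorem hasDerivAt_mul_deriv_div (hU : ContDiff ℝ 2 U) (hR : ContDiff ℝ 2 R)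
    (hR0 : ∀ x, R x ≠ 0) (x : ℝ) :
    HasDerivAt (fun t => R t * deriv (fun y => U y / R y) t) (deriv (deriv U) x
      - (deriv U x * logDeriv R x + U x * (deriv (deriv R) x / R x - logDeriv R x ^ 2))) x := by
  rw [funext fun t => mul_deriv_div_eq_sub_mul_logDeriv (hU.differentiable two_ne_zero t)
    (hR.differentiable two_ne_zero t) (hR0 t)]
  exact (hU.hasDerivAt_deriv_deriv x).sub
    ((hU.hasDerivAt_deriv two_ne_zero x).mul (hasDerivAt_logDeriv hR (hR0 x)))

end

theorem rpow_eq_mul_rpow_of_eq_add_one {r a b : ℝ} (hr : r ≠ 0) (hab : a = b + 1) :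
    r ^ a = r * r ^ b := by
  rw [hab, rpow_add_one hr, mul_comm]

theorem stmt7_general (s μ k : ℝ) (R U : ℝ → ℝ) (hR : ContDiff ℝ 3 R) (hRpos : ∀ x : ℝ, 0 < R x)
    (hU : ContDiff ℝ 2 U) (hp : ℝ → ℝ)
    (lam : ℂ) (ρ u : ℝ → ℂ) (hρ : ContDiff ℝ 3 ρ) (hu : ContDiff ℝ 2 u)
    (heq1 : ∀ x : ℝ, lam * ρ x =
      ((s - U x : ℝ) : ℂ) * deriv ρ x - (R x : ℂ) * deriv u x)
    (heq2 : ∀ x : ℝ, lam * u x =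
      -((hp (R x) : ℝ) : ℂ) * deriv ρ x + ((s - U x : ℝ) : ℂ) * deriv u x
        + (μ : ℂ) * (((R x)⁻¹ : ℝ) : ℂ) *
            deriv (fun y => (R y : ℂ) * deriv u y + (U y : ℂ) * deriv ρ y) x
        - ((μ * ((R x) ^ 2)⁻¹ * deriv (fun y => R y * U y) x : ℝ) : ℂ) * deriv ρ x
        + ((k ^ 2 / 2 : ℝ) : ℂ) * ((R x ^ (-(1:ℝ)/2) : ℝ) : ℂ) *
            deriv (deriv (fun y => ((R y ^ (-(1:ℝ)/2) : ℝ) : ℂ) * deriv ρ y)) x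
        - ((k ^ 2 / 2 * R x ^ (-(3:ℝ)/2)
              * deriv (deriv (fun y => R y ^ ((1:ℝ)/2))) x : ℝ) : ℂ) * deriv ρ x) :
    let v : ℝ → ℂ := fun x => (U x : ℂ) * ρ x + (R x : ℂ) * u x
    let g : ℝ → ℝ := fun x => R x * deriv (fun y => U y / R y) x
    let f₁ : ℝ → ℝ := fun x => R x * hp (R x) - (U x) ^ 2
    let f₂ : ℝ → ℝ := fun x => s - 2 * U x
    let rr : ℝ → ℝ := fun x => deriv R x / R x
    let LQ : ℝ → ℂ := fun x =>
      (1/2 : ℂ) * ((R x ^ ((1:ℝ)/2) : ℝ) : ℂ) *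
          deriv (deriv (fun y => ((R y ^ (-(1:ℝ)/2) : ℝ) : ℂ) * deriv ρ y)) x
        - ((1/2 * R x ^ (-(1:ℝ)/2)
              * deriv (deriv (fun y => R y ^ ((1:ℝ)/2))) x : ℝ) : ℂ) * deriv ρ x
    ∀ x : ℝ,
      (lam * ρ x =
        (s : ℂ) * deriv ρ x - deriv v x + (g x : ℂ) * ρ x + (rr x : ℂ) * v x) ∧
      (lam * v x =
        -(f₁ x : ℂ) * deriv ρ x + (f₂ x : ℂ) * deriv v x + (μ : ℂ) * deriv (deriv v) x
          - (f₂ x : ℂ) * (g x : ℂ) * ρ x - (rr x : ℂ) * (f₂ x : ℂ) * v x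
          - 2 * (μ : ℂ) * ((deriv U x : ℝ) : ℂ) * deriv ρ x
          - (μ : ℂ) * (rr x : ℂ) * deriv v x - (μ : ℂ) * ((deriv g x : ℝ) : ℂ) * ρ x
          - (μ : ℂ) * ((deriv rr x : ℝ) : ℂ) * v x + (k : ℂ) ^ 2 * LQ x) := by
  intro v g f₁ f₂ rr LQ x
  have hR0 : ∀ y, R y ≠ 0 := fun y => (hRpos y).ne'
  have hR2 : ContDiff ℝ 2 R := hR.of_le (by norm_num)
  have hρ2 : ContDiff ℝ 2 ρ := hρ.of_le (by norm_num)
  have hv' : deriv v x = _ := congrFun (deriv_ofReal_mul_add_ofReal_mul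
    (hU.differentiable two_ne_zero) (hR2.differentiable two_ne_zero)
    (hρ2.differentiable two_ne_zero) (hu.differentiable two_ne_zero)) x
  have hv'' : deriv (deriv v) x = _ := deriv_deriv_ofReal_mul_add_ofReal_mul hU hR2 hρ2 hu x
  have hw : deriv (fun y => (R y : ℂ) * deriv u y + (U y : ℂ) * deriv ρ y) x = _ :=
    congrFun (deriv_ofReal_mul_add_ofReal_mul (hR2.differentiable two_ne_zero)
      (hU.differentiable two_ne_zero) hu.differentiable_deriv_two
      hρ2.differentiable_deriv_two) x
  have hRU : deriv (fun y => R y * U y) x = deriv R x * U x + R x * deriv U x :=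
    ((hR2.hasDerivAt_deriv two_ne_zero x).mul (hU.hasDerivAt_deriv two_ne_zero x)).deriv
  have hg : g x = deriv U x - U x * logDeriv R x := mul_deriv_div_eq_sub_mul_logDeriv
    (hU.differentiable two_ne_zero x) (hR2.differentiable two_ne_zero x) (hR0 x)
  have hg' : deriv g x = _ := (hasDerivAt_mul_deriv_div hU hR2 hR0 x).deriv
  have hrr' : deriv rr x = _ := (hasDerivAt_logDeriv hR2 (hR0 x)).deriv
  have hhalf : R x ^ ((1:ℝ)/2) = R x * R x ^ (-(1:ℝ)/2) :=
    rpow_eq_mul_rpow_of_eq_add_one (hR0 x) (by norm_num)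
  have hneghalf : R x ^ (-(1:ℝ)/2) = R x * R x ^ (-(3:ℝ)/2) :=
    rpow_eq_mul_rpow_of_eq_add_one (hR0 x) (by norm_num)
  have hRC : (R x : ℂ) ≠ 0 := mod_cast hR0 x
  refine ⟨?_, ?_⟩
  · rw [heq1 x, hv', hg]
    simp only [v, rr, logDeriv_apply]
    push_cast
    field_simp
    ring
  · rw [show lam * v x = U x * (lam * ρ x) + R x * (lam * u x) by simp only [v]; ring,
      heq1 x, heq2 x, hv', hv'', hg, hg', hrr', hw, hRU]
    simp only [f₁, f₂, LQ, v, rr, logDeriv_apply, hhalf, hneghalf]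
    push_cast
    field_simp
    ring

/-- The change of variables `(ρ, u) ↦ (ρ, v)` with `v = Uρ + Ru` transforms the integrated
spectral problem into the working form used in the energy estimates. -/
theorem stmt7 (s μ k : ℝ) (R U : ℝ → ℝ) (hR : ContDiff ℝ 3 R) (hRpos : ∀ x : ℝ, 0 < R x)
    (hU : ContDiff ℝ 2 U) (hp : ℝ → ℝ) (hhp : ContDiffOn ℝ 1 hp (Set.Ioi 0))
    (lam : ℂ) (ρ u : ℝ → ℂ) (hρ : ContDiff ℝ 3 ρ) (hu : ContDiff ℝ 2 u)
    (heq1 : ∀ x : ℝ, lam * ρ x =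
      ((s - U x : ℝ) : ℂ) * deriv ρ x - (R x : ℂ) * deriv u x)
    (heq2 : ∀ x : ℝ, lam * u x =
      -((hp (R x) : ℝ) : ℂ) * deriv ρ x + ((s - U x : ℝ) : ℂ) * deriv u x
        + (μ : ℂ) * (((R x)⁻¹ : ℝ) : ℂ) *
            deriv (fun y => (R y : ℂ) * deriv u y + (U y : ℂ) * deriv ρ y) x
        - ((μ * ((R x) ^ 2)⁻¹ * deriv (fun y => R y * U y) x : ℝ) : ℂ) * deriv ρ x
        + ((k ^ 2 / 2 : ℝ) : ℂ) * ((R x ^ (-(1:ℝ)/2) : ℝ) : ℂ) *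
            deriv (deriv (fun y => ((R y ^ (-(1:ℝ)/2) : ℝ) : ℂ) * deriv ρ y)) x
        - ((k ^ 2 / 2 * R x ^ (-(3:ℝ)/2)
              * deriv (deriv (fun y => R y ^ ((1:ℝ)/2))) x : ℝ) : ℂ) * deriv ρ x) :
    let v : ℝ → ℂ := fun x => (U x : ℂ) * ρ x + (R x : ℂ) * u x
    let g : ℝ → ℝ := fun x => R x * deriv (fun y => U y / R y) x
    let f₁ : ℝ → ℝ := fun x => R x * hp (R x) - (U x) ^ 2
    let f₂ : ℝ → ℝ := fun x => s - 2 * U x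
    let rr : ℝ → ℝ := fun x => deriv R x / R x
    let LQ : ℝ → ℂ := fun x =>
      (1/2 : ℂ) * ((R x ^ ((1:ℝ)/2) : ℝ) : ℂ) *
          deriv (deriv (fun y => ((R y ^ (-(1:ℝ)/2) : ℝ) : ℂ) * deriv ρ y)) x
        - ((1/2 * R x ^ (-(1:ℝ)/2)
              * deriv (deriv (fun y => R y ^ ((1:ℝ)/2))) x : ℝ) : ℂ) * deriv ρ x
    ∀ x : ℝ,
      (lam * ρ x =
        (s : ℂ) * deriv ρ x - deriv v x + (g x : ℂ) * ρ x + (rr x : ℂ) * v x) ∧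
      (lam * v x =
        -(f₁ x : ℂ) * deriv ρ x + (f₂ x : ℂ) * deriv v x + (μ : ℂ) * deriv (deriv v) x
          - (f₂ x : ℂ) * (g x : ℂ) * ρ x - (rr x : ℂ) * (f₂ x : ℂ) * v x
          - 2 * (μ : ℂ) * ((deriv U x : ℝ) : ℂ) * deriv ρ x
          - (μ : ℂ) * (rr x : ℂ) * deriv v x - (μ : ℂ) * ((deriv g x : ℝ) : ℂ) * ρ x
          - (μ : ℂ) * ((deriv rr x : ℝ) : ℂ) * v x + (k : ℂ) ^ 2 * LQ x) :=
  stmt7_general s μ k R U hR hRpos hU hp lam ρ u hρ hu heq1 heq2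
end
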